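/- Let d ≥ 3 and 1 ≤ k ≤ ⌈(d−2)/2⌉ be integers and let p be an IDF prime for (d,k). Let α, β be nonzero rational numbers with v_p(α) < 0 and v_p(β) < 0. Then for every integer n ≥ 1 the orbit value f^n_{α,β}(0) is nonzero with v_p(f^n_{α,β}(0)) < 0, and v_p(f^{n+1}_{α,β}(0)) < v_p(f^n_{α,β}(0)); in particular, the critical point 0 is not periodic under f_{α,β} (f^n_{α,β}(0) ≠ 0 for all n ≥ 1). -/

import Mathlib

open Finset Function

/-- The coefficient `b_i` of `z^(d-i)` in the normalized dynamical Belyi polynomial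
`B_{d,k}`. -/
def belyiCoeff (d k i : ℕ) : ℚ :=
  ((-1 : ℚ) ^ (k - i) / ((k - i).factorial * i.factorial)) *
    ∏ j ∈ (Finset.range (k + 1)).erase i, ((d : ℚ) - (j : ℚ))

/-- The normalized dynamical Belyi polynomial `B_{d,k}` as a function on `ℚ`. -/
def belyi (d k : ℕ) (z : ℚ) : ℚ :=
  ∑ i ∈ Finset.range (k + 1), belyiCoeff d k i * z ^ (d - i)

/-- The map `f_{a,c}(z) = a · B_{d,k}(z) + c`. -/
def belyiMap (d k : ℕ) (a c z : ℚ) : ℚ := a * belyi d k z + c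

/-- `p` is an index divisor free (IDF) prime for the pair `(d,k)`:
`p` is a prime with `p > k`, `p ∣ d - r` for some `r ≤ k`, and `r ∤ v_p(d-r)`. -/
def IsIDFPrime (d k p : ℕ) : Prop :=
  p.Prime ∧ k < p ∧ ∃ r ≤ k, p ∣ (d - r) ∧ ¬ (r ∣ padicValNat p (d - r))

/-- A rational number is `p`-integral if it is zero or has nonnegative `p`-adic valuation. -/
def PIntegral (p : ℕ) (x : ℚ) : Prop := x = 0 ∨ 0 ≤ padicValRat p x

/-! For `v_p(z) < 0` the terms `b_i z^(d-i)` of `B_{d,k}(z)` have valuation `(d-r) v_p(z)` for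
`i = r` and `v_p(d-r) + (d-i) v_p(z)` otherwise, because `d - r` is the only one of `d, …, d-k`
divisible by `p > k`. The two smallest candidates come from `i = 0` and `i = r`, and they differ
because `r ∤ v_p(d-r)`; so the minimum is strict and `v_p(B(z)) ≤ (d-r) v_p(z) ≤ v_p(z)`.
Hence `v_p(α B(z)) < v_p(z)`, and while `v_p(z) ≤ v_p(β)` this term dominates `β`, so
`v_p(f(z)) < v_p(z)`. The orbit starts at `f(0) = β`. -/

namespace padicValRat

theorem ne_zero_of_neg {p : ℕ} {q : ℚ} (h : padicValRat p q < 0) : q ≠ 0 := by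
  rintro rfl
  simp at h

variable {p : ℕ} [Fact p.Prime]

theorem add_eq_left_of_lt {q r : ℚ} (hq : q ≠ 0) (h : padicValRat p q < padicValRat p r) :
    padicValRat p (q + r) = padicValRat p q := by
  rcases eq_or_ne r 0 with rfl | hr
  · rw [add_zero]
  refine add_eq_of_lt (fun hqr => h.ne ?_) hq hr h
  rw [eq_neg_of_add_eq_zero_right hqr, padicValRat.neg]

theorem finset_prod {ι : Type*} {s : Finset ι} {f : ι → ℚ} (hf : ∀ i ∈ s, f i ≠ 0) :
    padicValRat p (∏ i ∈ s, f i) = ∑ i ∈ s, padicValRat p (f i) := by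
  induction s using Finset.cons_induction with
  | empty => simp
  | cons a s ha ih =>
    rw [prod_cons, sum_cons, padicValRat.mul (hf a (mem_cons_self a s))
        (prod_ne_zero_iff.mpr fun i hi => hf i (mem_cons_of_mem hi)),
      ih fun i hi => hf i (mem_cons_of_mem hi)]

theorem lt_finset_sum {ι : Type*} {s : Finset ι} {f : ι → ℚ} {c : ℤ}
    (hf : ∀ i ∈ s, c < padicValRat p (f i)) (hs : ∑ i ∈ s, f i ≠ 0) :
    c < padicValRat p (∑ i ∈ s, f i) := by
  induction s using Finset.cons_induction with
  | empty => simp at hs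
  | cons a s ha ih =>
    rw [sum_cons] at hs ⊢
    rcases eq_or_ne (∑ i ∈ s, f i) 0 with hs0 | hs0
    · rw [hs0, add_zero]
      exact hf a (mem_cons_self a s)
    have hs_lt := ih (fun i hi => hf i (mem_cons_of_mem hi)) hs0
    exact (lt_min (hf a (mem_cons_self a s)) hs_lt).trans_le (min_le_padicValRat_add hs)

theorem finset_sum_eq_of_lt {ι : Type*} [DecidableEq ι] {s : Finset ι} {f : ι → ℚ} {i₀ : ι}
    (hi₀ : i₀ ∈ s) (hf : f i₀ ≠ 0)
    (hlt : ∀ i ∈ s, i ≠ i₀ → padicValRat p (f i₀) < padicValRat p (f i)) :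
    padicValRat p (∑ i ∈ s, f i) = padicValRat p (f i₀) := by
  rw [← add_sum_erase s f hi₀]
  rcases eq_or_ne (∑ i ∈ s.erase i₀, f i) 0 with h0 | h0
  · rw [h0, add_zero]
  exact add_eq_left_of_lt hf
    (lt_finset_sum (fun i hi => hlt i (mem_of_mem_erase hi) (ne_of_mem_erase hi)) h0)

theorem factorial_eq_zero {n : ℕ} (hn : n < p) : padicValRat p (n.factorial : ℚ) = 0 := by
  rw [padicValRat.of_nat, padicValNat.eq_zero_of_not_dvd, Nat.cast_zero]
  rw [Nat.Prime.dvd_factorial Fact.out]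
  omega

end padicValRat

theorem exists_strict_min_of_not_dvd {d k r : ℕ} {M V : ℤ} (hV : V < 0) (hM : 0 ≤ M)
    (hr : r ≤ k) (hrM : ¬ (r : ℤ) ∣ M) :
    ∃ i₀ ∈ range (k + 1),
      (if i₀ = r then 0 else M) + (d - i₀) * V ≤ (d - r) * V ∧
      ∀ i ∈ range (k + 1), i ≠ i₀ →
        (if i₀ = r then 0 else M) + (d - i₀) * V < (if i = r then 0 else M) + (d - i) * V := by
  have hshift : ∀ i : ℕ, i ≠ 0 → (d : ℤ) * V < (d - i) * V := fun i hi => by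
    have : (0 : ℤ) < i := by omega
    nlinarith
  have hne : M + d * V ≠ (d - r) * V := fun h => hrM ⟨-V, by linarith⟩
  rcases lt_or_gt_of_ne hne with hlt | hlt
  · have hr0 : r ≠ 0 := by rintro rfl; simp at hlt; omega
    refine ⟨0, by simp, by simp [Ne.symm hr0]; linarith, fun i _ hi => ?_⟩
    simp only [Ne.symm hr0, if_false, Nat.cast_zero, sub_zero]
    split_ifs with hir
    · subst hir; linarith
    · linarith [hshift i hi]
  · refine ⟨r, by simp; omega, by simp, fun i _ hi => ?_⟩
    simp only [if_true, zero_add, if_neg hi]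
    rcases eq_or_ne i 0 with rfl | hi0
    · simpa using hlt
    · linarith [hshift i hi0]

section Belyi

variable {p d k r : ℕ}

theorem padicValRat_natCast_sub_eq_zero (hkp : k < p) (hr : r ≤ k) (hdvd : (p : ℤ) ∣ d - r)
    {j : ℕ} (hj : j ≤ k) (hjr : j ≠ r) : padicValRat p ((d : ℚ) - j) = 0 := by
  have hcast : (d : ℚ) - j = ((d - j : ℤ) : ℚ) := by push_cast; rfl
  rw [hcast, padicValRat.of_int, padicValInt.eq_zero_of_not_dvd, Nat.cast_zero]
  intro hdvdj
  have hdiff : (j : ℤ) - r = 0 :=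
    Int.eq_zero_of_abs_lt_dvd (by simpa using dvd_sub hdvd hdvdj) (abs_lt.mpr ⟨by omega, by omega⟩)
  omega

variable [Fact p.Prime]

theorem belyiCoeff_ne_zero (hkd : k < d) (i : ℕ) : belyiCoeff d k i ≠ 0 := by
  refine mul_ne_zero (by positivity) (prod_ne_zero_iff.mpr fun j hj => sub_ne_zero.mpr ?_)
  have : j < d := by have := mem_range.mp (mem_of_mem_erase hj); omega
  exact_mod_cast this.ne'

theorem padicValRat_belyiCoeff (hkp : k < p) (hkd : k < d) (hr : r ≤ k)
    (hdvd : (p : ℤ) ∣ d - r) {i : ℕ} (hi : i ≤ k) :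
    padicValRat p (belyiCoeff d k i) = if i = r then 0 else padicValRat p ((d : ℚ) - r) := by
  have hsign : padicValRat p ((-1 : ℚ) ^ (k - i)) = 0 := by
    rw [padicValRat.pow, padicValRat.neg, padicValRat.one, mul_zero]
  have hfact : padicValRat p (((k - i).factorial : ℚ) * i.factorial) = 0 := by
    rw [padicValRat.mul (by positivity) (by positivity), padicValRat.factorial_eq_zero (by omega),
      padicValRat.factorial_eq_zero (by omega), add_zero]
  have hfactors : ∀ j ∈ (range (k + 1)).erase i,
      padicValRat p ((d : ℚ) - j) = if r = j then padicValRat p ((d : ℚ) - r) else 0 := by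
    intro j hj
    split_ifs with hrj
    · rw [hrj]
    · exact padicValRat_natCast_sub_eq_zero hkp hr hdvd
        (by have := mem_range.mp (mem_of_mem_erase hj); omega) (Ne.symm hrj)
  have hprod := belyiCoeff_ne_zero hkd i
  rw [belyiCoeff, mul_ne_zero_iff, prod_ne_zero_iff] at hprod
  rw [belyiCoeff, padicValRat.mul hprod.1 (prod_ne_zero_iff.mpr hprod.2),
    padicValRat.div (by positivity) (by positivity), hsign, hfact,
    padicValRat.finset_prod hprod.2, sum_congr rfl hfactors, sum_ite_eq]
  by_cases hir : i = r
  · simp [hir]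
  · simp [hir, Ne.symm hir]; omega

theorem padicValRat_belyi_le (hkp : k < p) (hkd : k < d) (hr : r ≤ k)
    (hdvd : (p : ℤ) ∣ d - r) (hrM : ¬ (r : ℤ) ∣ padicValRat p ((d : ℚ) - r)) {z : ℚ}
    (hz : padicValRat p z < 0) :
    padicValRat p (belyi d k z) ≤ (d - r) * padicValRat p z := by
  have hM : 0 ≤ padicValRat p ((d : ℚ) - r) := by
    rw [show (d : ℚ) - r = ((d - r : ℤ) : ℚ) by push_cast; rfl, padicValRat.of_int]
    exact Nat.cast_nonneg _
  set M := padicValRat p ((d : ℚ) - r)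
  have hz0 : z ≠ 0 := padicValRat.ne_zero_of_neg hz
  have hterm_ne : ∀ i, belyiCoeff d k i * z ^ (d - i) ≠ 0 := fun i =>
    mul_ne_zero (belyiCoeff_ne_zero hkd i) (pow_ne_zero _ hz0)
  have hterm : ∀ i ∈ range (k + 1), padicValRat p (belyiCoeff d k i * z ^ (d - i)) =
      (if i = r then 0 else M) + (d - i) * padicValRat p z := by
    intro i hi
    have hik : i ≤ k := Nat.lt_succ_iff.mp (mem_range.mp hi)
    rw [padicValRat.mul (belyiCoeff_ne_zero hkd i) (pow_ne_zero _ hz0),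
      padicValRat.pow, padicValRat_belyiCoeff hkp hkd hr hdvd hik, Nat.cast_sub (by omega)]
  obtain ⟨i₀, hi₀, hle, hmin⟩ := exists_strict_min_of_not_dvd hz hM hr hrM
  rw [belyi, padicValRat.finset_sum_eq_of_lt hi₀ (hterm_ne i₀) fun i hi hne => by
    rw [hterm i hi, hterm i₀ hi₀]; exact hmin i hi hne, hterm i₀ hi₀]
  exact hle

theorem padicValRat_belyiMap_lt (hkp : k < p) (hkd : k < d) (hr : r ≤ k)
    (hdvd : (p : ℤ) ∣ d - r) (hrM : ¬ (r : ℤ) ∣ padicValRat p ((d : ℚ) - r)) {a c z : ℚ}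
    (ha : padicValRat p a < 0) (hz : padicValRat p z < 0)
    (hzc : padicValRat p z ≤ padicValRat p c) :
    padicValRat p (belyiMap d k a c z) < padicValRat p z := by
  have hB := padicValRat_belyi_le hkp hkd hr hdvd hrM hz
  have hdr : (1 : ℤ) ≤ d - r := by omega
  have hBz : padicValRat p (belyi d k z) ≤ padicValRat p z := hB.trans (by nlinarith)
  have haB : padicValRat p (a * belyi d k z) < padicValRat p z := by
    rw [padicValRat.mul (padicValRat.ne_zero_of_neg ha)
      (padicValRat.ne_zero_of_neg (hBz.trans_lt hz))]
    linarith
  rw [belyiMap, padicValRat.add_eq_left_of_lt (padicValRat.ne_zero_of_neg (haB.trans hz))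
    (haB.trans_le hzc)]
  exact haB

theorem belyiMap_zero (hkd : k < d) (a c : ℚ) : belyiMap d k a c 0 = c := by
  rw [belyiMap, belyi, sum_eq_zero fun i hi => ?_, mul_zero, zero_add]
  rw [zero_pow (by have := mem_range.mp hi; omega), mul_zero]

end Belyi

theorem IsIDFPrime.exists_index {d k p : ℕ} (h : IsIDFPrime d k p) :
    ∃ r ≤ k, r < d ∧ (p : ℤ) ∣ d - r ∧ ¬ (r : ℤ) ∣ padicValRat p ((d : ℚ) - r) := by
  obtain ⟨-, -, r, hr, hdvd, hrv⟩ := h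
  have hrd : r < d := by
    by_contra! hdr
    rw [Nat.sub_eq_zero_of_le hdr, padicValNat_zero_right] at hrv
    exact hrv (dvd_zero r)
  refine ⟨r, hr, hrd, ?_, ?_⟩
  · simpa [Nat.cast_sub hrd.le] using Int.natCast_dvd_natCast.mpr hdvd
  rw [← Nat.cast_sub hrd.le, padicValRat.of_nat]
  exact_mod_cast hrv

theorem orbit_of_zero_val_strict_anti_general (d k p : ℕ)
    (hk2 : k ≤ (d - 1) / 2) (hp : IsIDFPrime d k p)
    (α β : ℚ)
    (hvα : padicValRat p α < 0) (hvβ : padicValRat p β < 0) :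
    ∀ n : ℕ, 1 ≤ n →
      (belyiMap d k α β)^[n] 0 ≠ 0 ∧
      padicValRat p ((belyiMap d k α β)^[n] 0) < 0 ∧
      padicValRat p ((belyiMap d k α β)^[n + 1] 0) <
        padicValRat p ((belyiMap d k α β)^[n] 0) := by
  have : Fact p.Prime := ⟨hp.1⟩
  obtain ⟨r, hr, hrd, hdvd, hrM⟩ := hp.exists_index
  have hkd : k < d := by omega
  have hstep {z : ℚ} (hz : padicValRat p z < 0) (hzβ : padicValRat p z ≤ padicValRat p β) :
      padicValRat p (belyiMap d k α β z) < padicValRat p z :=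
    padicValRat_belyiMap_lt hp.2.1 hkd hr hdvd hrM hvα hz hzβ
  have horbit : ∀ n, 1 ≤ n → padicValRat p ((belyiMap d k α β)^[n] 0) ≤ padicValRat p β := by
    intro n hn
    induction n, hn using Nat.le_induction with
    | base => rw [iterate_one, belyiMap_zero hkd]
    | succ n _ ih =>
      rw [iterate_succ_apply']
      exact (hstep (ih.trans_lt hvβ) ih).le.trans ih
  intro n hn
  have hneg := (horbit n hn).trans_lt hvβ
  refine ⟨padicValRat.ne_zero_of_neg hneg, hneg, ?_⟩
  rw [iterate_succ_apply']
  exact hstep hneg (horbit n hn)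

/-- (Case 1 of the integrality proof.)  If `v_p(α) < 0` and
`v_p(β) < 0`, then the valuation of the orbit of `0` is negative and strictly
decreasing; in particular `0` is not periodic. -/
theorem orbit_of_zero_val_strict_anti (d k p : ℕ) (hd : 3 ≤ d) (hk1 : 1 ≤ k)
    (hk2 : k ≤ (d - 1) / 2) (hp : IsIDFPrime d k p)
    (α β : ℚ) (hα : α ≠ 0) (hβ : β ≠ 0)
    (hvα : padicValRat p α < 0) (hvβ : padicValRat p β < 0) :
    ∀ n : ℕ, 1 ≤ n →
      (belyiMap d k α β)^[n] 0 ≠ 0 ∧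
      padicValRat p ((belyiMap d k α β)^[n] 0) < 0 ∧
      padicValRat p ((belyiMap d k α β)^[n + 1] 0) <
        padicValRat p ((belyiMap d k α β)^[n] 0) :=
  orbit_of_zero_val_strict_anti_general d k p hk2 hp α β hvα hvβ
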